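/- arXiv:1706.06653 — 3 statements merged into one kernel-verified Lean document; each statement's English description precedes it below -/
import Mathlib

section
/- For 0 < q < 1, fixed nonnegative integers j_1 < j_2 < ... < j_m, and n ≥ m, the sum of q^{k_1+...+k_n} over all strictly increasing n-tuples 0 ≤ k_1 < ... < k_n of nonnegative integers whose underlying set contains {j_1,...,j_m} equals q^{j_1+...+j_m} times the coefficient of z^{n-m} in the power series ∏_{k=0}^∞ (1+q^k z) · ∏_{i=1}^m (1+q^{j_i} z)^{-1}. -/
/-!
Write `J = {j₁, …, jₘ}` and `r = n - m`. Near `z = 0` the factors `1 + q^{jᵢ} z` cancel, leaving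
`∏_{k ∉ J} (1 + q^k z) = ∑_d e_d z^d`, where `e_d` is the `d`-th elementary symmetric function of
`(q^k)_{k ∉ J}` (expand the absolutely convergent product over finite sets and group these by
size); so the coefficient in question is `e_r`. On the other side, a strictly increasing
`n`-tuple is determined by its range, and `s ↦ s \ J` matches the `n`-sets containing `J` with
the `r`-sets avoiding `J`, turning `q^{Σ s}` into `q^{Σ J} · q^{Σ (s \ J)}`.
-/

open Filter Finset Topology
open scoped Nat

noncomputable def tsumEsymm {ι R : Type*} [CommSemiring R] [TopologicalSpace R] (v : ι → R)
    (d : ℕ) : R :=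
  ∑' s : {s : Finset ι // #s = d}, ∏ i ∈ s.1, v i

theorem one_add_ne_zero_of_norm_lt_one {R : Type*} [NormedRing R] [NormOneClass R] {a : R}
    (ha : ‖a‖ < 1) : 1 + a ≠ 0 := fun h ↦ by
  simp [eq_neg_of_add_eq_zero_right h] at ha

theorem tprod_one_add_eq_tprod_indicator_compl_mul_prod {ι R : Type*} [CommSemiring R]
    [TopologicalSpace R] [ContinuousMul R] [T2Space R] {v : ι → R} (S : Finset ι)
    (hv : Multipliable fun i ↦ 1 + (↑S : Set ι)ᶜ.indicator v i) :
    ∏' i, (1 + v i) = (∏' i, (1 + (↑S : Set ι)ᶜ.indicator v i)) * ∏ i ∈ S, (1 + v i) := by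
  classical
  have hS : HasProd (fun i ↦ if i ∈ S then 1 + v i else 1) (∏ i ∈ S, (1 + v i)) := by
    simpa [prod_ite_mem] using hasProd_prod_of_ne_finset_one (s := S)
      (f := fun i ↦ if i ∈ S then 1 + v i else 1) fun i hi ↦ if_neg hi
  rw [← (hv.hasProd.mul hS).tprod_eq]
  refine tprod_congr fun i ↦ ?_
  by_cases hi : i ∈ S <;> simp [hi]

section Analytic

variable {𝕜 ι : Type*} [NontriviallyNormedField 𝕜] [CompleteSpace 𝕜] {v : ι → 𝕜}

theorem hasSum_tsumEsymm_mul_pow (hv : Summable (‖v ·‖)) (z : 𝕜) :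
    HasSum (fun d ↦ tsumEsymm v d * z ^ d) (∏' i, (1 + v i * z)) := by
  have hvz : Summable (‖v · * z‖) := by simpa [norm_mul] using hv.mul_right ‖z‖
  have hsum := (summable_finsetProd_of_summable_norm hvz).hasSum
  rw [← tprod_one_add (summable_finsetProd_of_summable_norm hvz)] at hsum
  refine (((Equiv.sigmaFiberEquiv Finset.card).hasSum_iff).2 hsum).sigma fun d ↦ ?_
  have hfiber : HasSum (fun s : {s : Finset ι // #s = d} ↦ ∏ i ∈ s.1, v i) (tsumEsymm v d) :=
    ((summable_finsetProd_of_summable_norm hv).subtype {s | #s = d}).hasSum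
  refine (hfiber.mul_right (z ^ d)).congr_fun fun ⟨s, hs⟩ ↦ ?_
  simp [prod_mul_distrib, hs]

theorem iteratedDeriv_eq_factorial_mul_of_hasSum [CharZero 𝕜] {f : 𝕜 → 𝕜} {c : ℕ → 𝕜}
    (h : ∀ᶠ z in 𝓝 0, HasSum (fun d ↦ c d * z ^ d) (f z)) (d : ℕ) :
    iteratedDeriv d f 0 = d ! * c d := by
  have hp : HasFPowerSeriesAt f (FormalMultilinearSeries.ofScalars 𝕜 c) 0 :=
    hasFPowerSeriesAt_iff.2 (by simpa [FormalMultilinearSeries.coeff_ofScalars, mul_comm] using h)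
  have := congrArg (·.coeff d) (hp.eq_formalMultilinearSeries hp.analyticAt.hasFPowerSeriesAt)
  simp only [FormalMultilinearSeries.coeff_ofScalars] at this
  rw [this, mul_div_cancel₀ _ (by exact_mod_cast d.factorial_ne_zero)]

theorem iteratedDeriv_tprod_one_add_mul_zero [CharZero 𝕜] (hv : Summable (‖v ·‖)) (d : ℕ) :
    iteratedDeriv d (fun z ↦ ∏' i, (1 + v i * z)) 0 = d ! * tsumEsymm v d :=
  iteratedDeriv_eq_factorial_mul_of_hasSum (.of_forall (hasSum_tsumEsymm_mul_pow hv)) d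

theorem tprod_one_add_mul_mul_prod_inv (hv : Summable (‖v ·‖)) (S : Finset ι) {z : 𝕜}
    (hz : ∀ i ∈ S, 1 + v i * z ≠ 0) :
    (∏' i, (1 + v i * z)) * ∏ i ∈ S, (1 + v i * z)⁻¹ =
      ∏' i, (1 + (↑S : Set ι)ᶜ.indicator v i * z) := by
  have hmul : Multipliable fun i ↦ 1 + (↑S : Set ι)ᶜ.indicator (v · * z) i := by
    simp only [Set.indicator_mul_left]
    refine multipliable_one_add_of_summable ?_
    simpa [norm_mul, norm_indicator_eq_indicator_norm] using (hv.indicator _).mul_right ‖z‖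
  rw [tprod_one_add_eq_tprod_indicator_compl_mul_prod S hmul, mul_assoc, ← prod_mul_distrib,
    prod_congr rfl fun i hi ↦ mul_inv_cancel₀ (hz i hi), prod_const_one, mul_one]
  simp only [Set.indicator_mul_left]

end Analytic

section StrictMonoSuperset

variable {α : Type*} [LinearOrder α] {n : ℕ}

theorem subset_image_univ_of_coe_subset_range {S : Finset α} {f : Fin n → α}
    (h : ↑S ⊆ Set.range f) : S ⊆ univ.image f := by
  simpa [← coe_subset] using h

def strictMonoSupersetEquiv (S : Finset α) (hn : #S ≤ n) :
    {f : Fin n → α // StrictMono f ∧ ↑S ⊆ Set.range f} ≃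
      {u : {u : Finset α // #u = n - #S} // Disjoint u.1 S} where
  toFun f := ⟨⟨univ.image f.1 \ S, by
      rw [card_sdiff_of_subset (subset_image_univ_of_coe_subset_range f.2.2),
        card_image_of_injective _ f.2.1.injective, card_univ, Fintype.card_fin]⟩,
    sdiff_disjoint⟩
  invFun u := ⟨(u.1.1 ∪ S).orderEmbOfFin (by rw [card_union_of_disjoint u.2, u.1.2]; omega),
    (orderEmbOfFin _ _).strictMono, by rw [range_orderEmbOfFin]; exact subset_union_right⟩
  left_inv f := Subtype.ext <| Eq.symm <| orderEmbOfFin_unique _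
    (fun i ↦ by
      rw [sdiff_union_of_subset (subset_image_univ_of_coe_subset_range f.2.2)]
      exact mem_image_of_mem _ (mem_univ i)) f.2.1
  right_inv u := Subtype.ext <| Subtype.ext <| by
    simp only [image_orderEmbOfFin_univ, union_sdiff_cancel_right u.2]

theorem tsum_prod_strictMono_superset {R : Type*} [Semifield R] [TopologicalSpace R]
    [IsTopologicalSemiring R] [T2Space R] (x : α → R) (S : Finset α) (hn : #S ≤ n) :
    ∑' f : {f : Fin n → α // StrictMono f ∧ ↑S ⊆ Set.range f}, ∏ i, x (f.1 i) =
      (∏ k ∈ S, x k) * tsumEsymm ((↑S : Set α)ᶜ.indicator x) (n - #S) := by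
  classical
  set G : {u : Finset α // #u = n - #S} → R :=
    fun u ↦ (∏ k ∈ S, x k) * ∏ k ∈ u.1, (↑S : Set α)ᶜ.indicator x k
  have hterm : ∀ f : {f : Fin n → α // StrictMono f ∧ ↑S ⊆ Set.range f},
      ∏ i, x (f.1 i) = G (strictMonoSupersetEquiv S hn f).1 := by
    intro f
    have hS := subset_image_univ_of_coe_subset_range f.2.2
    rw [← prod_image fun i _ j _ h ↦ f.2.1.injective h, ← sdiff_union_of_subset hS,
      prod_union sdiff_disjoint, mul_comm]
    congr 1
    refine prod_congr rfl fun k hk ↦ ?_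
    rw [Set.indicator_of_mem (by simpa using (mem_sdiff.1 hk).2)]
  have hsupport : Function.support G ⊆ {u | Disjoint u.1 S} := by
    intro u hu
    by_contra hdisj
    obtain ⟨k, hku, hkS⟩ := not_disjoint_iff.1 hdisj
    exact hu (mul_eq_zero_of_right _ (prod_eq_zero hku (by simp [hkS])))
  rw [tsum_congr hterm, (strictMonoSupersetEquiv S hn).tsum_eq (fun u ↦ G u.1)]
  exact (tsum_subtype_eq_of_support_subset hsupport).trans tsum_mul_left

end StrictMonoSuperset

/-- the sum of q^{k₁+...+kₙ} over strictly increasing n-tuples of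
nonnegative integers containing {j₁,...,jₘ} equals q^{j₁+...+jₘ} times the coefficient
of z^{n-m} in ∏_{k≥0}(1+qᵏz) · ∏_{i=1}^m (1+q^{jᵢ}z)⁻¹. -/
theorem stmt1 (q : ℝ) (hq0 : 0 < q) (hq1 : q < 1) (m n : ℕ) (hmn : m ≤ n)
    (j : Fin m → ℕ) (hj : StrictMono j) :
    ∑' f : {f : Fin n → ℕ // StrictMono f ∧ Set.range j ⊆ Set.range f},
      (q : ℂ) ^ (∑ i, (f : Fin n → ℕ) i) =
    (q : ℂ) ^ (∑ i, j i) *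
      (iteratedDeriv (n - m)
          (fun z : ℂ => (∏' k : ℕ, (1 + (q : ℂ) ^ k * z)) *
            ∏ i, (1 + (q : ℂ) ^ (j i) * z)⁻¹) 0 / (n - m).factorial) := by
  classical
  set S : Finset ℕ := univ.image j
  have hrange : Set.range j = ↑S := by simp [S]
  have hcard : #S = m := by simp [S, card_image_of_injective _ hj.injective]
  have hprod_S (x : ℕ → ℂ) : ∏ k ∈ S, x k = ∏ i, x (j i) :=
    prod_image fun _ _ _ _ h ↦ hj.injective h
  have hqnorm : ‖(q : ℂ)‖ < 1 := by simp [abs_of_pos hq0, hq1]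
  have hgeom : Summable (‖(q : ℂ) ^ ·‖) := by
    simpa using summable_geometric_of_lt_one (norm_nonneg _) hqnorm
  set w : ℕ → ℂ := (↑S : Set ℕ)ᶜ.indicator ((q : ℂ) ^ ·)
  have hw : Summable (‖w ·‖) := by
    simpa [w, norm_indicator_eq_indicator_norm] using hgeom.indicator _
  have hF : (fun z : ℂ ↦ (∏' k : ℕ, (1 + (q : ℂ) ^ k * z)) * ∏ i, (1 + (q : ℂ) ^ (j i) * z)⁻¹)
      =ᶠ[𝓝 0] fun z ↦ ∏' k, (1 + w k * z) := by
    filter_upwards [Metric.ball_mem_nhds (0 : ℂ) one_pos] with z hz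
    rw [← hprod_S fun k ↦ (1 + (q : ℂ) ^ k * z)⁻¹]
    refine tprod_one_add_mul_mul_prod_inv hgeom S fun k _ ↦ one_add_ne_zero_of_norm_lt_one ?_
    rw [norm_mul, norm_pow]
    exact (mul_le_of_le_one_left (norm_nonneg z) (pow_le_one₀ (norm_nonneg _) hqnorm.le)).trans_lt
      (mem_ball_zero_iff.1 hz)
  rw [hF.iteratedDeriv_eq, iteratedDeriv_tprod_one_add_mul_zero hw,
    mul_div_cancel_left₀ _ (Nat.cast_ne_zero.2 (n - m).factorial_ne_zero), hrange]
  simp_rw [← prod_pow_eq_pow_sum]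
  rw [tsum_prod_strictMono_superset _ S (hcard ▸ hmn), hcard, hprod_S]
end

section
/- For 0 < q < 1 and all nonzero complex w, the Jacobi triple product identity holds: (-w;q)_∞ · (-q/w;q)_∞ · (q;q)_∞ = ∑_{k=-∞}^{∞} q^{k(k-1)/2} w^k. -/
/-!
Substituting `x = w / q ^ N` into Cauchy's `q`-binomial theorem
`∏_{j<n} (1 + x q^j) = ∑_k q^(k(k-1)/2) [n, k]_q x^k` with `n = 2N`, and splitting the product at
`j = N`, gives the finite identity
`(-w;q)_N (-q/w;q)_N = ∑_{|l| ≤ N} q^(l(l-1)/2) w^l [2N, N+l]_q`.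
For `0 < q < 1` the coefficient `[2N, N+l]_q = (q;q)_{2N} / ((q;q)_{N+l} (q;q)_{N-l})` tends to
`1 / (q;q)_∞` and is bounded by `1 / (q;q)_∞²`, so Tannery's theorem lets `N → ∞` termwise.
-/

open Finset Filter Topology

lemma Int.two_mul_mul_sub_one_ediv_two (a : ℤ) : 2 * (a * (a - 1) / 2) = a * (a - 1) :=
  Int.two_mul_ediv_two_of_even (Int.even_mul_pred_self a)

lemma Int.natCast_choose_two (n : ℕ) : ((n.choose 2 : ℕ) : ℤ) = n * ((n : ℤ) - 1) / 2 := by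
  rw [Nat.choose_two_right, Int.natCast_div]
  cases n <;> simp

section CommRing

variable {R : Type*} [CommRing R]

def qBinomial (q : R) : ℕ → ℕ → R
  | _, 0 => 1
  | 0, _ + 1 => 0
  | n + 1, k + 1 => qBinomial q n k + q ^ (k + 1) * qBinomial q n (k + 1)

@[simp]
lemma qBinomial_zero_right (q : R) (n : ℕ) : qBinomial q n 0 = 1 := by
  cases n <;> rfl

@[simp]
lemma qBinomial_zero_succ (q : R) (k : ℕ) : qBinomial q 0 (k + 1) = 0 := rfl

lemma qBinomial_succ_succ (q : R) (n k : ℕ) :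
    qBinomial q (n + 1) (k + 1) = qBinomial q n k + q ^ (k + 1) * qBinomial q n (k + 1) := rfl

lemma qBinomial_eq_zero_of_lt (q : R) {n k : ℕ} (h : n < k) : qBinomial q n k = 0 := by
  induction n generalizing k with
  | zero => obtain ⟨k, rfl⟩ := Nat.exists_eq_succ_of_ne_zero h.ne'; rfl
  | succ n ih =>
    obtain ⟨k, rfl⟩ := Nat.exists_eq_succ_of_ne_zero (Nat.ne_zero_of_lt h)
    rw [qBinomial_succ_succ, ih (by omega), ih (by omega), mul_zero, add_zero]

@[simp]
lemma qBinomial_self (q : R) (n : ℕ) : qBinomial q n n = 1 := by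
  induction n with
  | zero => rfl
  | succ n ih =>
    rw [qBinomial_succ_succ, ih, qBinomial_eq_zero_of_lt q n.lt_succ_self, mul_zero, add_zero]

lemma map_qBinomial {S : Type*} [CommRing S] (f : R →+* S) (q : R) (n k : ℕ) :
    f (qBinomial q n k) = qBinomial (f q) n k := by
  induction n generalizing k with
  | zero => cases k <;> simp
  | succ n ih => cases k <;> simp [qBinomial_succ_succ, ih]

theorem prod_one_add_mul_pow_eq_sum_qBinomial (q x : R) (n : ℕ) :
    ∏ j ∈ range n, (1 + x * q ^ j) =
      ∑ k ∈ range (n + 1), q ^ k.choose 2 * qBinomial q n k * x ^ k := by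
  induction n generalizing x with
  | zero => simp
  | succ n ih =>
    have hprod : ∏ j ∈ range (n + 1), (1 + x * q ^ j) =
        (∏ j ∈ range n, (1 + x * q * q ^ j)) * (1 + x) := by
      simp [prod_range_succ', pow_succ', mul_assoc]
    have hshift : ∑ k ∈ range (n + 1), q ^ k.choose 2 * qBinomial q n k * (x * q) ^ k =
        1 + ∑ k ∈ range (n + 1),
          q ^ (k + 1).choose 2 * qBinomial q n (k + 1) * (x * q) ^ (k + 1) := by
      rw [sum_range_succ', sum_range_succ _ n, qBinomial_eq_zero_of_lt q n.lt_succ_self]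
      simp [add_comm]
    rw [hprod, ih, mul_one_add, sum_mul,
      sum_range_succ' (fun k => q ^ k.choose 2 * qBinomial q (n + 1) k * x ^ k)]
    nth_rewrite 1 [hshift]
    rw [add_assoc, add_comm, ← sum_add_distrib]
    simp only [pow_zero, Nat.choose_zero_succ, qBinomial_zero_right, mul_one]
    refine congrArg (· + 1) (sum_congr rfl fun k _ => ?_)
    rw [qBinomial_succ_succ, Nat.choose_succ_succ', Nat.choose_one_right]
    ring

def qPochhammer (a q : R) (n : ℕ) : R := ∏ i ∈ range n, (1 - a * q ^ i)

@[simp]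
lemma qPochhammer_zero (a q : R) : qPochhammer a q 0 = 1 := prod_range_zero _

lemma qPochhammer_succ (a q : R) (n : ℕ) :
    qPochhammer a q (n + 1) = qPochhammer a q n * (1 - a * q ^ n) := prod_range_succ _ _

lemma qBinomial_mul_qPochhammer_mul_qPochhammer (q : R) {n k : ℕ} (h : k ≤ n) :
    qBinomial q n k * qPochhammer q q k * qPochhammer q q (n - k) = qPochhammer q q n := by
  induction n generalizing k with
  | zero => obtain rfl := Nat.le_zero.mp h; simp
  | succ n ih =>
    rcases k with _ | k
    · simp
    rcases (Nat.succ_le_succ_iff.mp h).lt_or_eq with hk | rfl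
    · obtain ⟨m, rfl⟩ := Nat.exists_eq_add_of_lt hk
      have h₁ := ih (k := k) (by omega)
      have h₂ := ih (k := k + 1) (by omega)
      rw [show k + m + 1 - k = m + 1 by omega, qPochhammer_succ _ _ m] at h₁
      rw [show k + m + 1 - (k + 1) = m by omega, qPochhammer_succ _ _ k] at h₂
      rw [show k + m + 1 + 1 - (k + 1) = m + 1 by omega, qBinomial_succ_succ,
        qPochhammer_succ _ _ k, qPochhammer_succ _ _ m, qPochhammer_succ _ _ (k + m + 1)]
      linear_combination (1 - q * q ^ k) * h₁ + q ^ (k + 1) * (1 - q * q ^ m) * h₂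
    · simp

def centralQBinomial (q : R) (N : ℕ) (l : ℤ) : R :=
  if -(N : ℤ) ≤ l then qBinomial q (2 * N) (N + l).toNat else 0

lemma map_centralQBinomial {S : Type*} [CommRing S] (f : R →+* S) (q : R) (N : ℕ) (l : ℤ) :
    f (centralQBinomial q N l) = centralQBinomial (f q) N l := by
  unfold centralQBinomial
  split_ifs <;> simp [map_qBinomial]

lemma tsum_mul_centralQBinomial [TopologicalSpace R] [T2Space R] (g : ℤ → R) (q : R) (N : ℕ) :
    ∑' l : ℤ, g l * centralQBinomial q N l =
      ∑ k ∈ range (2 * N + 1), g ((k : ℤ) - N) * qBinomial q (2 * N) k := by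
  have hinj : Function.Injective fun k : ℕ => (k : ℤ) - N := fun a b h => by simpa using h
  have hsupp : (Function.support fun l => g l * centralQBinomial q N l) ⊆
      Set.range fun k : ℕ => (k : ℤ) - N := by
    intro l hl
    by_cases h : -(N : ℤ) ≤ l
    · exact ⟨(N + l).toNat, show _ - _ = _ by omega⟩
    · simp [centralQBinomial, h] at hl
  rw [← hinj.tsum_eq hsupp, tsum_eq_sum (s := range (2 * N + 1))]
  · exact sum_congr rfl fun k _ => by simp [centralQBinomial]
  · intro k hk
    rw [centralQBinomial, if_pos (by omega), qBinomial_eq_zero_of_lt q (by simp at hk; omega),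
      mul_zero]

noncomputable def qPochhammerInf [TopologicalSpace R] (a q : R) : R := ∏' i : ℕ, (1 - a * q ^ i)

end CommRing

section Field

variable {K : Type*} [Field K]

lemma prod_range_div_pow_succ (w q : K) (N : ℕ) :
    ∏ j ∈ range N, w / q ^ (j + 1) = w ^ N / q ^ (N + 1).choose 2 := by
  induction N with
  | zero => simp
  | succ N ih =>
    rw [prod_range_succ, ih, Nat.choose_succ_succ' (N + 1), Nat.choose_one_right]
    ring

theorem prod_mul_prod_eq_sum_qBinomial {q w : K} (hq : q ≠ 0) (hw : w ≠ 0) (N : ℕ) :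
    (∏ j ∈ range N, (1 + w * q ^ j)) * ∏ j ∈ range N, (1 + q / w * q ^ j) =
      ∑ k ∈ range (2 * N + 1),
        q ^ (((k : ℤ) - N) * ((k : ℤ) - N - 1) / 2) * w ^ ((k : ℤ) - N) *
          qBinomial q (2 * N) k := by
  set x := w / q ^ N with hx
  -- Read backwards, the first `N` factors of `∏_{j<2N} (1 + x q^j)` are these.
  have hlow : ∀ j ∈ range N,
      1 + x * q ^ (N - 1 - j) = w / q ^ (j + 1) * (1 + q / w * q ^ j) := by
    intro j hj
    obtain ⟨m, rfl⟩ : ∃ m, N = m + (j + 1) := ⟨N - (j + 1), by have := mem_range.mp hj; omega⟩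
    rw [hx, show m + (j + 1) - 1 - j = m by omega, pow_add]
    field_simp
    ring
  have hhigh : ∀ j ∈ range N, 1 + x * q ^ (N + j) = 1 + w * q ^ j := by
    intro j _
    rw [hx, pow_add]
    field_simp
  have key := prod_one_add_mul_pow_eq_sum_qBinomial q x (2 * N)
  rw [two_mul, prod_range_add, ← prod_range_reflect, prod_congr rfl hlow, prod_mul_distrib,
    prod_range_div_pow_succ, prod_congr rfl hhigh, ← two_mul] at key
  have hsum : (∏ j ∈ range N, (1 + w * q ^ j)) * ∏ j ∈ range N, (1 + q / w * q ^ j) =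
      q ^ (N + 1).choose 2 / w ^ N *
        ∑ k ∈ range (2 * N + 1), q ^ k.choose 2 * qBinomial q (2 * N) k * x ^ k := by
    rw [← key]
    field_simp
  rw [hsum, mul_sum]
  refine sum_congr rfl fun k _ => ?_
  have hexp : ((k : ℤ) - N) * ((k : ℤ) - N - 1) / 2 =
      ((N + 1).choose 2 : ℕ) + (k.choose 2 : ℕ) + -(N * k : ℤ) := by
    have h₁ := Int.two_mul_mul_sub_one_ediv_two (N + 1)
    have h₂ := Int.two_mul_mul_sub_one_ediv_two k
    have h₃ := Int.two_mul_mul_sub_one_ediv_two (k - N)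
    rw [Int.natCast_choose_two, Int.natCast_choose_two]
    push_cast
    linarith
  rw [hexp, zpow_add₀ hq, zpow_add₀ hq, zpow_neg, zpow_sub₀ hw, ← Nat.cast_mul]
  simp only [zpow_natCast, hx, div_pow, ← pow_mul]
  field_simp

end Field

section NormedField

variable {K : Type*} [NormedField K]

lemma summable_norm_mul_pow (c : K) {q : K} (hq : ‖q‖ < 1) :
    Summable fun i : ℕ => ‖c * q ^ i‖ := by
  simpa [norm_mul, norm_pow] using (summable_geometric_of_lt_one (norm_nonneg q) hq).mul_left ‖c‖

lemma multipliable_one_add_mul_pow [CompleteSpace K] (c : K) {q : K} (hq : ‖q‖ < 1) :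
    Multipliable fun i : ℕ => 1 + c * q ^ i :=
  multipliable_one_add_of_summable (summable_norm_mul_pow c hq)

lemma multipliable_one_sub_mul_pow [CompleteSpace K] (a : K) {q : K} (hq : ‖q‖ < 1) :
    Multipliable fun i : ℕ => 1 - a * q ^ i := by
  simpa only [neg_mul, ← sub_eq_add_neg] using multipliable_one_add_mul_pow (-a) hq

lemma tendsto_qPochhammer [CompleteSpace K] (a : K) {q : K} (hq : ‖q‖ < 1) :
    Tendsto (qPochhammer a q) atTop (𝓝 (qPochhammerInf a q)) :=
  (multipliable_one_sub_mul_pow a hq).hasProd.tendsto_prod_nat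

lemma summable_norm_zpow_mul_pow {q : K} (hq₀ : q ≠ 0) (hq : ‖q‖ < 1) {b : K} (hb : b ≠ 0) :
    Summable fun n : ℕ => ‖q ^ ((n : ℤ) * (n - 1) / 2) * b ^ n‖ := by
  have hstep : ∀ n : ℕ, ‖q ^ (((n + 1 : ℕ) : ℤ) * ((n + 1 : ℕ) - 1) / 2) * b ^ (n + 1)‖ =
      ‖q ^ ((n : ℤ) * (n - 1) / 2) * b ^ n‖ * (‖q‖ ^ n * ‖b‖) := by
    intro n
    have hexp : ((n + 1 : ℕ) : ℤ) * ((n + 1 : ℕ) - 1) / 2 = (n : ℤ) * (n - 1) / 2 + n := by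
      push_cast; grind
    rw [hexp, zpow_add₀ hq₀, zpow_natCast, pow_succ]
    simp only [norm_mul, norm_pow]
    ring
  have hne : ∀ n : ℕ, ‖q ^ ((n : ℤ) * (n - 1) / 2) * b ^ n‖ ≠ 0 := fun n =>
    norm_ne_zero_iff.mpr (mul_ne_zero (zpow_ne_zero _ hq₀) (pow_ne_zero _ hb))
  refine summable_of_ratio_test_tendsto_lt_one zero_lt_one (Eventually.of_forall hne) ?_
  have hlim : Tendsto (fun n : ℕ => ‖q‖ ^ n * ‖b‖) atTop (𝓝 0) := by
    simpa using (tendsto_pow_atTop_nhds_zero_of_lt_one (norm_nonneg q) hq).mul_const ‖b‖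
  refine hlim.congr fun n => ?_
  rw [norm_norm, norm_norm, hstep, mul_div_cancel_left₀ _ (hne n)]

lemma summable_norm_zpow_mul_zpow {q : K} (hq₀ : q ≠ 0) (hq : ‖q‖ < 1) {b : K} (hb : b ≠ 0) :
    Summable fun l : ℤ => ‖q ^ (l * (l - 1) / 2) * b ^ l‖ := by
  refine Summable.of_nat_of_neg (by simpa using summable_norm_zpow_mul_pow hq₀ hq hb) ?_
  refine (summable_norm_zpow_mul_pow hq₀ hq (div_ne_zero hq₀ hb)).congr fun n => ?_
  have hexp : (-(n : ℤ)) * (-(n : ℤ) - 1) / 2 = (n : ℤ) * (n - 1) / 2 + n := by grind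
  rw [hexp, zpow_add₀ hq₀, zpow_neg, zpow_natCast, zpow_natCast, div_pow, div_eq_mul_inv]
  ring_nf

end NormedField

section Real

variable {q : ℝ}

lemma mul_pow_lt_one (hq₀ : 0 ≤ q) (hq₁ : q < 1) (i : ℕ) : q * q ^ i < 1 := by
  rw [← pow_succ']
  exact pow_lt_one₀ hq₀ hq₁ i.succ_ne_zero

lemma qPochhammer_self_pos (hq₀ : 0 ≤ q) (hq₁ : q < 1) (n : ℕ) : 0 < qPochhammer q q n :=
  prod_pos fun i _ => sub_pos.mpr (mul_pow_lt_one hq₀ hq₁ i)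

lemma qPochhammer_self_le_one (hq₀ : 0 ≤ q) (hq₁ : q < 1) (n : ℕ) : qPochhammer q q n ≤ 1 :=
  prod_le_one (fun i _ => (sub_pos.mpr (mul_pow_lt_one hq₀ hq₁ i)).le)
    fun i _ => sub_le_self _ (by positivity)

lemma antitone_qPochhammer_self (hq₀ : 0 ≤ q) (hq₁ : q < 1) : Antitone (qPochhammer q q) :=
  antitone_nat_of_succ_le fun n => by
    rw [qPochhammer_succ]
    exact mul_le_of_le_one_right (qPochhammer_self_pos hq₀ hq₁ n).le (sub_le_self _ (by positivity))

lemma tendsto_qPochhammer_self (hq₀ : 0 ≤ q) (hq₁ : q < 1) :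
    Tendsto (qPochhammer q q) atTop (𝓝 (qPochhammerInf q q)) :=
  tendsto_qPochhammer q (by rwa [Real.norm_of_nonneg hq₀])

lemma qPochhammerInf_self_le (hq₀ : 0 ≤ q) (hq₁ : q < 1) (n : ℕ) :
    qPochhammerInf q q ≤ qPochhammer q q n :=
  (antitone_qPochhammer_self hq₀ hq₁).le_of_tendsto (tendsto_qPochhammer_self hq₀ hq₁) n

lemma qPochhammerInf_self_pos (hq₀ : 0 ≤ q) (hq₁ : q < 1) : 0 < qPochhammerInf q q := by
  refine lt_of_le_of_ne (ge_of_tendsto' (tendsto_qPochhammer_self hq₀ hq₁)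
    fun n => (qPochhammer_self_pos hq₀ hq₁ n).le) (Ne.symm ?_)
  have h := tprod_one_add_ne_zero_of_summable (f := fun i : ℕ => -q * q ^ i)
    (fun i => by linarith [mul_pow_lt_one hq₀ hq₁ i])
    (summable_norm_mul_pow (-q) (by rwa [Real.norm_of_nonneg hq₀]))
  simpa [qPochhammerInf, sub_eq_add_neg] using h

lemma qBinomial_eq_div (hq₀ : 0 ≤ q) (hq₁ : q < 1) {n k : ℕ} (h : k ≤ n) :
    qBinomial q n k = qPochhammer q q n / (qPochhammer q q k * qPochhammer q q (n - k)) := by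
  have hF := qPochhammer_self_pos hq₀ hq₁
  rw [eq_div_iff (mul_pos (hF k) (hF (n - k))).ne', ← mul_assoc,
    qBinomial_mul_qPochhammer_mul_qPochhammer q h]

lemma qBinomial_nonneg (hq₀ : 0 ≤ q) (n k : ℕ) : 0 ≤ qBinomial q n k := by
  induction n generalizing k with
  | zero => cases k <;> simp
  | succ n ih =>
    cases k with
    | zero => simp
    | succ k =>
      have := ih k
      have := ih (k + 1)
      rw [qBinomial_succ_succ]
      positivity

lemma qBinomial_le (hq₀ : 0 ≤ q) (hq₁ : q < 1) (n k : ℕ) :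
    qBinomial q n k ≤ (qPochhammerInf q q * qPochhammerInf q q)⁻¹ := by
  have hP := qPochhammerInf_self_pos hq₀ hq₁
  rcases le_or_gt k n with h | h
  · have hF := qPochhammer_self_pos hq₀ hq₁
    have hPF := qPochhammerInf_self_le hq₀ hq₁
    rw [qBinomial_eq_div hq₀ hq₁ h, div_eq_mul_inv]
    calc qPochhammer q q n * (qPochhammer q q k * qPochhammer q q (n - k))⁻¹
        ≤ (qPochhammer q q k * qPochhammer q q (n - k))⁻¹ :=
          mul_le_of_le_one_left (inv_pos.mpr (mul_pos (hF k) (hF _))).le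
            (qPochhammer_self_le_one hq₀ hq₁ n)
      _ ≤ _ := inv_anti₀ (mul_pos hP hP) (mul_le_mul (hPF k) (hPF _) hP.le (hF k).le)
  · rw [qBinomial_eq_zero_of_lt q h]
    positivity

lemma tendsto_qBinomial (hq₀ : 0 ≤ q) (hq₁ : q < 1) {n k : ℕ → ℕ} (hk : Tendsto k atTop atTop)
    (hnk : Tendsto (fun i => n i - k i) atTop atTop) :
    Tendsto (fun i => qBinomial q (n i) (k i)) atTop (𝓝 (qPochhammerInf q q)⁻¹) := by
  have hF := tendsto_qPochhammer_self hq₀ hq₁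
  have hP := (qPochhammerInf_self_pos hq₀ hq₁).ne'
  have hn : Tendsto n atTop atTop := tendsto_atTop_mono (fun i => Nat.sub_le (n i) (k i)) hnk
  have hlim := (hF.comp hn).div ((hF.comp hk).mul (hF.comp hnk)) (mul_ne_zero hP hP)
  rw [div_mul_cancel_left₀ hP] at hlim
  refine hlim.congr' ?_
  filter_upwards [hnk.eventually_gt_atTop 0] with i hi
  exact (qBinomial_eq_div hq₀ hq₁ (by omega)).symm

lemma centralQBinomial_nonneg (hq₀ : 0 ≤ q) (N : ℕ) (l : ℤ) : 0 ≤ centralQBinomial q N l := by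
  unfold centralQBinomial
  split_ifs
  exacts [qBinomial_nonneg hq₀ _ _, le_rfl]

lemma centralQBinomial_le (hq₀ : 0 ≤ q) (hq₁ : q < 1) (N : ℕ) (l : ℤ) :
    centralQBinomial q N l ≤ (qPochhammerInf q q * qPochhammerInf q q)⁻¹ := by
  have hP := qPochhammerInf_self_pos hq₀ hq₁
  unfold centralQBinomial
  split_ifs
  exacts [qBinomial_le hq₀ hq₁ _ _, by positivity]

lemma tendsto_centralQBinomial (hq₀ : 0 ≤ q) (hq₁ : q < 1) (l : ℤ) :
    Tendsto (fun N => centralQBinomial q N l) atTop (𝓝 (qPochhammerInf q q)⁻¹) := by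
  have hk : Tendsto (fun N : ℕ => ((N : ℤ) + l).toNat) atTop atTop :=
    tendsto_atTop_atTop.mpr fun b => ⟨b + l.natAbs, fun N hN => by omega⟩
  have hnk : Tendsto (fun N : ℕ => 2 * N - ((N : ℤ) + l).toNat) atTop atTop :=
    tendsto_atTop_atTop.mpr fun b => ⟨b + l.natAbs, fun N hN => by omega⟩
  refine (tendsto_qBinomial hq₀ hq₁ hk hnk).congr' ?_
  filter_upwards [eventually_ge_atTop l.natAbs] with N hN
  rw [centralQBinomial, if_pos (by omega)]

theorem tprod_mul_tprod_eq_tsum_div (hq₀ : 0 < q) (hq₁ : q < 1) {w : ℂ} (hw : w ≠ 0) :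
    (∏' k : ℕ, (1 + w * (q : ℂ) ^ k)) * ∏' k : ℕ, (1 + (q : ℂ) / w * (q : ℂ) ^ k) =
      (∑' l : ℤ, (q : ℂ) ^ (l * (l - 1) / 2) * w ^ l) / (qPochhammerInf q q : ℝ) := by
  have hq : ‖(q : ℂ)‖ < 1 := by simpa [abs_of_pos hq₀] using hq₁
  have hq' : (q : ℂ) ≠ 0 := by exact_mod_cast hq₀.ne'
  have hpartial : ∀ N : ℕ, (∏ j ∈ range N, (1 + w * (q : ℂ) ^ j)) *
      ∏ j ∈ range N, (1 + (q : ℂ) / w * (q : ℂ) ^ j) =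
        ∑' l : ℤ, (q : ℂ) ^ (l * (l - 1) / 2) * w ^ l * ((centralQBinomial q N l : ℝ) : ℂ) := by
    intro N
    have hc : ∀ l, ((centralQBinomial q N l : ℝ) : ℂ) = centralQBinomial (q : ℂ) N l :=
      map_centralQBinomial Complex.ofRealHom q N
    simp only [hc, tsum_mul_centralQBinomial, prod_mul_prod_eq_sum_qBinomial hq' hw]
  have hlim : Tendsto (fun N : ℕ =>
      ∑' l : ℤ, (q : ℂ) ^ (l * (l - 1) / 2) * w ^ l * ((centralQBinomial q N l : ℝ) : ℂ)) atTop
      (𝓝 (∑' l : ℤ, (q : ℂ) ^ (l * (l - 1) / 2) * w ^ l * ((qPochhammerInf q q)⁻¹ : ℝ))) :=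
    tendsto_tsum_of_dominated_convergence
      ((summable_norm_zpow_mul_zpow hq' hq hw).mul_right
        (qPochhammerInf q q * qPochhammerInf q q)⁻¹)
      (fun l => ((Complex.continuous_ofReal.tendsto _).comp
        (tendsto_centralQBinomial hq₀.le hq₁ l)).const_mul ((q : ℂ) ^ (l * (l - 1) / 2) * w ^ l))
      (Eventually.of_forall fun N l => by
        rw [norm_mul, Complex.norm_real, Real.norm_of_nonneg (centralQBinomial_nonneg hq₀.le N l)]
        exact mul_le_mul_of_nonneg_left (centralQBinomial_le hq₀.le hq₁ N l) (norm_nonneg _))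
  have hprod := (multipliable_one_add_mul_pow w hq).hasProd.tendsto_prod_nat.mul
    (multipliable_one_add_mul_pow ((q : ℂ) / w) hq).hasProd.tendsto_prod_nat
  rw [tendsto_nhds_unique (hprod.congr hpartial) hlim, tsum_mul_right, Complex.ofReal_inv,
    div_eq_mul_inv]

end Real

/-- Jacobi triple product: for 0 < q < 1 and w ≠ 0,
(-w;q)_∞ · (-q/w;q)_∞ · (q;q)_∞ = ∑_{k∈ℤ} q^{k(k-1)/2} wᵏ. -/
theorem stmt4 (q : ℝ) (hq0 : 0 < q) (hq1 : q < 1) (w : ℂ) (hw : w ≠ 0) :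
    (∏' k : ℕ, (1 + w * (q : ℂ) ^ k)) * (∏' k : ℕ, (1 + ((q : ℂ) / w) * (q : ℂ) ^ k)) *
      (∏' k : ℕ, (1 - (q : ℂ) ^ (k + 1))) =
    ∑' k : ℤ, (q : ℂ) ^ (k * (k - 1) / 2) * w ^ k := by
  have hmul := multipliable_one_sub_mul_pow q (q := q) (by rwa [Real.norm_of_nonneg hq0.le])
  have hcast : ∏' k : ℕ, (1 - (q : ℂ) ^ (k + 1)) = (qPochhammerInf q q : ℝ) := by
    simpa [qPochhammerInf, pow_succ'] using
      (hmul.map_tprod Complex.ofRealHom Complex.continuous_ofReal).symm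
  rw [tprod_mul_tprod_eq_tsum_div hq0 hq1 hw, hcast, div_mul_cancel₀]
  exact_mod_cast (qPochhammerInf_self_pos hq0.le hq1).ne'
end

section
/- Let 0 < q < 1, H a Hilbert space with orthonormal basis {φ_k}, M(q) the diagonal operator with eigenvalues q^k, K(z;q) the diagonal operator with eigenvalues q^k z/(1+q^k z), and P any orthogonal projection on H. Then for all z ∉ {-q^{-k}}, the operator identity (I + zM(q))(I − K(z;q)(I−P)) = I + zM(q)P holds, and consequently det(I + zM(q)P) = (-z;q)_∞ · det(I − K(z;q)(I−P)). -/
/-!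
On the eigenbasis, `K` is `zM(1 + zM)⁻¹`, so `(1 + zM) K = zM`; the operator identity is then
pure ring algebra, valid for any `P`. Since `1 + zM` is diagonal, the `N × N` minor of
`(1 + zM) T` is `diag(1 + qⁱz)` times that of `T`, and the partial products `∏_{i<N} (1 + qⁱz)`
converge to `(-z;q)_∞` because `∑ qᵏ‖z‖ < ∞`.
-/

open Filter Topology

namespace HilbertBasis

variable {ι 𝕜 E : Type*} [RCLike 𝕜] [NormedAddCommGroup E] [InnerProductSpace 𝕜 E]

theorem ext_continuousLinearMap {F : Type*} [TopologicalSpace F] [AddCommGroup F]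
    [Module 𝕜 F] [T2Space F] (b : HilbertBasis ι 𝕜 E) {S T : E →L[𝕜] F}
    (h : ∀ i, S (b i) = T (b i)) : S = T :=
  ContinuousLinearMap.ext_on (Submodule.dense_iff_topologicalClosure_eq_top.mpr b.dense_span)
    (by rintro _ ⟨i, rfl⟩; exact h i)

theorem repr_apply_of_apply_eq_smul (b : HilbertBasis ι 𝕜 E) {T : E →L[𝕜] E}
    {c : ι → 𝕜} (hT : ∀ j, T (b j) = c j • b j) (x : E) (i : ι) :
    b.repr (T x) i = c i * b.repr x i := by
  have hcoord : (innerSL 𝕜 (b i)).comp T = c i • innerSL 𝕜 (b i) := by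
    refine b.ext_continuousLinearMap fun j => ?_
    rcases eq_or_ne i j with rfl | hij
    · simp [hT]
    · simp [hT, b.orthonormal.inner_eq_zero hij]
  simpa [b.repr_apply_apply] using congr($hcoord x)

theorem det_minor_mul_of_apply_eq_smul (b : HilbertBasis ℕ 𝕜 E) {D : E →L[𝕜] E}
    {d : ℕ → 𝕜} (hD : ∀ j, D (b j) = d j • b j) (T : E →L[𝕜] E) (N : ℕ) :
    (Matrix.of fun i j : Fin N => b.repr ((D * T) (b j)) i).det =
      (∏ i ∈ Finset.range N, d i) * (Matrix.of fun i j : Fin N => b.repr (T (b j)) i).det := by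
  have hmat : (Matrix.of fun i j : Fin N => b.repr ((D * T) (b j)) i) =
      Matrix.diagonal (fun i : Fin N => d i) *
        Matrix.of fun i j : Fin N => b.repr (T (b j)) i := by
    ext i j
    simp [Matrix.diagonal_mul, b.repr_apply_of_apply_eq_smul hD]
  rw [hmat, Matrix.det_mul, Matrix.det_diagonal, Fin.prod_univ_eq_prod_range (fun i => d i)]

end HilbertBasis

theorem one_add_mul_one_sub_mul_one_sub {R : Type*} [Ring R] {A K : R} (hK : (1 + A) * K = A)
    (P : R) : (1 + A) * (1 - K * (1 - P)) = 1 + A * P := by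
  calc (1 + A) * (1 - K * (1 - P)) = 1 + A - (1 + A) * K * (1 - P) := by noncomm_ring
    _ = 1 + A * P := by rw [hK]; noncomm_ring

theorem multipliable_one_add_pow_mul {R : Type*} [NormedCommRing R] [NormOneClass R]
    [CompleteSpace R] {q : R} (hq : ‖q‖ < 1) (z : R) : Multipliable fun k : ℕ => 1 + q ^ k * z := by
  refine multipliable_one_add_of_summable ?_
  refine ((summable_geometric_of_lt_one (norm_nonneg q) hq).mul_right ‖z‖).of_nonneg_of_le
    (fun _ => norm_nonneg _) fun k => ?_
  exact (norm_mul_le _ _).trans (mul_le_mul_of_nonneg_right (norm_pow_le q k) (norm_nonneg z))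

theorem stmt11_general {H : Type*} [NormedAddCommGroup H] [InnerProductSpace ℂ H]
    (q : ℝ) (hq0 : 0 < q) (hq1 : q < 1)
    (φ : HilbertBasis ℕ ℂ H) (z : ℂ) (hz : ∀ k : ℕ, z ≠ -((q : ℂ) ^ k)⁻¹)
    (M K P : H →L[ℂ] H)
    (hM : ∀ j : ℕ, M (φ j) = (q : ℂ) ^ j • φ j)
    (hK : ∀ j : ℕ, K (φ j) = ((q : ℂ) ^ j * z / (1 + (q : ℂ) ^ j * z)) • φ j) :
    (1 + z • M) * (1 - K * (1 - P)) = 1 + z • (M * P) ∧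
    ∀ d : ℂ,
      Tendsto (fun N : ℕ => Matrix.det (Matrix.of fun i j : Fin N =>
          φ.repr ((1 - K * (1 - P)) (φ (j : ℕ))) (i : ℕ))) atTop (𝓝 d) →
      Tendsto (fun N : ℕ => Matrix.det (Matrix.of fun i j : Fin N =>
          φ.repr ((1 + z • (M * P)) (φ (j : ℕ))) (i : ℕ))) atTop
        (𝓝 ((∏' k : ℕ, (1 + (q : ℂ) ^ k * z)) * d)) := by
  have hne : ∀ k, 1 + (q : ℂ) ^ k * z ≠ 0 := fun k h =>
    hz k (neg_eq_iff_eq_neg.mp (eq_inv_of_mul_eq_one_right (by linear_combination -h)))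
  have hD : ∀ j, (1 + z • M) (φ j) = (1 + (q : ℂ) ^ j * z) • φ j := fun j => by
    simp [hM, add_smul, smul_smul, mul_comm]
  have hres : (1 + z • M) * K = z • M := φ.ext_continuousLinearMap fun j => by
    simp only [mul_apply_eq_comp, hK, map_smul, hD, smul_smul, smul_apply, hM]
    congr 1
    field_simp [hne j]
  have hid : (1 + z • M) * (1 - K * (1 - P)) = 1 + z • (M * P) := by
    rw [one_add_mul_one_sub_mul_one_sub hres, smul_mul_assoc]
  refine ⟨hid, fun d hd => ?_⟩
  have hq : ‖(q : ℂ)‖ < 1 := by rwa [Complex.norm_real, Real.norm_of_nonneg hq0.le]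
  refine ((multipliable_one_add_pow_mul hq z).hasProd.tendsto_prod_nat.mul hd).congr
    fun N => ?_
  rw [← hid, φ.det_minor_mul_of_apply_eq_smul hD]

/-- with M(q)φₖ = qᵏφₖ, K(z;q)φₖ = (qᵏz)/(1+qᵏz)φₖ and P an orthogonal
projection, for z avoiding the poles {-q^{-k}} one has the operator identity
(I + zM(q))(I − K(z;q)(I−P)) = I + zM(q)P, and consequently
det(I + zM(q)P) = (-z;q)_∞ · det(I − K(z;q)(I−P)), where the Fredholm determinants
are the limits of the determinants of the N×N principal minors in the basis {φₖ}. -/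
theorem stmt11 {H : Type*} [NormedAddCommGroup H] [InnerProductSpace ℂ H]
    [CompleteSpace H] (q : ℝ) (hq0 : 0 < q) (hq1 : q < 1)
    (φ : HilbertBasis ℕ ℂ H) (z : ℂ) (hz : ∀ k : ℕ, z ≠ -((q : ℂ) ^ k)⁻¹)
    (M K P : H →L[ℂ] H)
    (hM : ∀ j : ℕ, M (φ j) = (q : ℂ) ^ j • φ j)
    (hK : ∀ j : ℕ, K (φ j) = ((q : ℂ) ^ j * z / (1 + (q : ℂ) ^ j * z)) • φ j)
    (hP : P * P = P) (hPsa : IsSelfAdjoint P) :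
    (1 + z • M) * (1 - K * (1 - P)) = 1 + z • (M * P) ∧
    ∀ d : ℂ,
      Tendsto (fun N : ℕ => Matrix.det (Matrix.of fun i j : Fin N =>
          φ.repr ((1 - K * (1 - P)) (φ (j : ℕ))) (i : ℕ))) atTop (𝓝 d) →
      Tendsto (fun N : ℕ => Matrix.det (Matrix.of fun i j : Fin N =>
          φ.repr ((1 + z • (M * P)) (φ (j : ℕ))) (i : ℕ))) atTop
        (𝓝 ((∏' k : ℕ, (1 + (q : ℂ) ^ k * z)) * d)) :=
  stmt11_general q hq0 hq1 φ z hz M K P hM hK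
end
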